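/- Let A be a Banach algebra with a bounded left approximate identity such that A·B** ⊆ B and B**·A ⊆ B for a Banach A-bimodule B, and suppose every derivation from A** into B*** is weak*-to-weak* continuous. If every continuous derivation from A into B* is inner, then every continuous derivation from A** into B*** is inner. -/

import Mathlib

namespace NormedSpace

/-- The topological dual of a seminormed space `E` (as `NormedSpace.Dual` was defined in the older Mathlib). -/
abbrev Dual (𝕜 : Type*) [NontriviallyNormedField 𝕜] (E : Type*) [SeminormedAddCommGroup E]
    [NormedSpace 𝕜 E] : Type _ := E →L[𝕜] 𝕜

end NormedSpace

open ContinuousLinearMap NormedSpace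

noncomputable section

section Defs

variable {X Y Z W : Type} [NormedAddCommGroup X] [NormedSpace ℝ X]
  [NormedAddCommGroup Y] [NormedSpace ℝ Y] [NormedAddCommGroup Z] [NormedSpace ℝ Z]
  [NormedAddCommGroup W] [NormedSpace ℝ W]

/-- The first adjoint `m^*` of a bounded bilinear map `m : X × Y → Z`,
as a map `Z^* × X → Y^*`, `⟨m^*(z',x), y⟩ = ⟨z', m(x,y)⟩`. -/
def adj1 (m : X →L[ℝ] Y →L[ℝ] Z) :
    Dual ℝ Z →L[ℝ] X →L[ℝ] Dual ℝ Y :=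
  (((ContinuousLinearMap.compL ℝ X (Y →L[ℝ] Z) (Dual ℝ Y)).flip m).comp
    (ContinuousLinearMap.compL ℝ Y Z ℝ))

@[simp] lemma adj1_apply (m : X →L[ℝ] Y →L[ℝ] Z) (z' : Dual ℝ Z) (x : X) (y : Y) :
    adj1 m z' x y = z' (m x y) := rfl

/-- The first (left) Arens extension `m^{***} : X^{**} × Y^{**} → Z^{**}` of a
bounded bilinear map `m : X × Y → Z`. -/
def arens (m : X →L[ℝ] Y →L[ℝ] Z) :
    Dual ℝ (Dual ℝ X) →L[ℝ] Dual ℝ (Dual ℝ Y) →L[ℝ] Dual ℝ (Dual ℝ Z) :=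
  adj1 (adj1 (adj1 m))

/-- The adjoint (dual map) of a bounded linear map. -/
def dualMap' (D : X →L[ℝ] Y) : Dual ℝ Y →L[ℝ] Dual ℝ X :=
  (ContinuousLinearMap.compL ℝ X Y ℝ).flip D

@[simp] lemma dualMap'_apply (D : X →L[ℝ] Y) (g : Dual ℝ Y) (x : X) :
    dualMap' D g x = g (D x) := rfl

/-- The second adjoint `D'' : X^{**} → Y^{**}` of a bounded linear map. -/
def bidualMap (D : X →L[ℝ] Y) : Dual ℝ (Dual ℝ X) →L[ℝ] Dual ℝ (Dual ℝ Y) :=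
  dualMap' (dualMap' D)

/-- Given an action `t : A × X → X`, the transposed action on the dual `X^*`:
`(dualAct t) a f = f ∘ (t a)`. -/
def dualAct (t : W →L[ℝ] X →L[ℝ] X) : W →L[ℝ] Dual ℝ X →L[ℝ] Dual ℝ X :=
  ((ContinuousLinearMap.compL ℝ X X ℝ).flip).comp t

@[simp] lemma dualAct_apply (t : W →L[ℝ] X →L[ℝ] X) (a : W) (f : Dual ℝ X) (x : X) :
    dualAct t a f x = f (t a x) := rfl

/-- `D : A → X` is a derivation with respect to the multiplication `mul'` on `A`
and the left action `l` and right action `r` (`r a x` means `x · a`) of `A` on `X`. -/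
def IsDer {A' : Type} [NormedAddCommGroup A'] [NormedSpace ℝ A']
    (mul' : A' →L[ℝ] A' →L[ℝ] A') (l r : A' →L[ℝ] X →L[ℝ] X) (D : A' →L[ℝ] X) : Prop :=
  ∀ a b : A', D (mul' a b) = l a (D b) + r b (D a)

/-- `D : A → X` is an inner derivation: `D a = a·x - x·a` for some `x`. -/
def IsInner {A' : Type} [NormedAddCommGroup A'] [NormedSpace ℝ A']
    (l r : A' →L[ℝ] X →L[ℝ] X) (D : A' →L[ℝ] X) : Prop :=
  ∃ x : X, ∀ a : A', D a = l a x - r a x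

/-- The bimodule axioms for actions `l`, `r` of an algebra with multiplication `mul'`. -/
def IsBimod {A' : Type} [NormedAddCommGroup A'] [NormedSpace ℝ A']
    (mul' : A' →L[ℝ] A' →L[ℝ] A') (l r : A' →L[ℝ] X →L[ℝ] X) : Prop :=
  (∀ a b x, l (mul' a b) x = l a (l b x)) ∧
  (∀ a b x, r (mul' a b) x = r b (r a x)) ∧
  (∀ a b x, l a (r b x) = r b (l a x))

/-- weak*-to-weak* continuity of a map between dual spaces. -/
def WStarCont (f : Dual ℝ X → Dual ℝ Y) : Prop :=
  ∀ y : Y, Continuous fun φ : WeakDual ℝ X => f φ y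

end Defs

/-- A packaged Banach `A`-bimodule (used to form iterated duals). -/
structure ModPk (A : Type) [NormedAddCommGroup A] [NormedSpace ℝ A] : Type 1 where
  X : Type
  [grp : NormedAddCommGroup X]
  [mod : NormedSpace ℝ X]
  l : A →L[ℝ] X →L[ℝ] X
  r : A →L[ℝ] X →L[ℝ] X

attribute [instance] ModPk.grp ModPk.mod

variable {A : Type} [NormedAddCommGroup A] [NormedSpace ℝ A]

/-- The canonical dual of a packaged bimodule. -/
def ModPk.dual (P : ModPk A) : ModPk A :=
  ⟨Dual ℝ P.X, dualAct P.r, dualAct P.l⟩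

/-- The `n`-th iterated dual of a packaged bimodule. -/
def ModPk.iter (P : ModPk A) : ℕ → ModPk A
  | 0 => P
  | n+1 => (P.iter n).dual

/-- A "level": an algebra (given by its bilinear multiplication) together with a bimodule. -/
structure Lvl : Type 1 where
  Alg : Type
  [g1 : NormedAddCommGroup Alg]
  [m1 : NormedSpace ℝ Alg]
  Mod : Type
  [g2 : NormedAddCommGroup Mod]
  [m2 : NormedSpace ℝ Mod]
  mul : Alg →L[ℝ] Alg →L[ℝ] Alg
  l : Alg →L[ℝ] Mod →L[ℝ] Mod
  r : Alg →L[ℝ] Mod →L[ℝ] Mod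

attribute [instance] Lvl.g1 Lvl.m1 Lvl.g2 Lvl.m2

/-- Passing to second duals: `A^{**}` with the first Arens product, acting on `B^{**}`
via the Arens extensions `π_ℓ^{***}` and `π_r^{***}` of the module actions. -/
def Lvl.double (Q : Lvl) : Lvl where
  Alg := Dual ℝ (Dual ℝ Q.Alg)
  Mod := Dual ℝ (Dual ℝ Q.Mod)
  mul := arens Q.mul
  l := arens Q.l
  r := (arens Q.r.flip).flip

/-- Iterated even duals: `Lvl.iter Q n` is the level `(A^{(2n)}, B^{(2n)})`. -/
def Lvl.iter (Q : Lvl) : ℕ → Lvl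
  | 0 => Q
  | n+1 => (Q.iter n).double

/-- The canonical embedding `A → A^{(2n)}`. -/
def Lvl.embA (Q : Lvl) : (n : ℕ) → Q.Alg →L[ℝ] (Q.iter n).Alg
  | 0 => ContinuousLinearMap.id ℝ _
  | n+1 => (inclusionInDoubleDual ℝ ((Q.iter n).Alg)).comp (Q.embA n)

/-- The canonical embedding `B → B^{(2n)}`. -/
def Lvl.embM (Q : Lvl) : (n : ℕ) → Q.Mod →L[ℝ] (Q.iter n).Mod
  | 0 => ContinuousLinearMap.id ℝ _
  | n+1 => (inclusionInDoubleDual ℝ ((Q.iter n).Mod)).comp (Q.embM n)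

/-- The left-topological-center condition `Z^ℓ_{A^{(2n+2)}}(B^{(2n+2)}) = B^{(2n+2)}`,
stated at the double of a level `Q`: for each `b` in the second-dual module, the map
`a ↦ b·a` is weak*-to-weak* continuous. -/
def Lvl.doubleZl (Q : Lvl) : Prop :=
  ∀ b : (Q.double).Mod, WStarCont (X := Dual ℝ Q.Alg) (Y := Dual ℝ Q.Mod)
    (fun a => (Q.double).r a b)

/-- The base level of a Banach algebra `A` with a Banach `A`-bimodule `B`. -/
def lvlOf (A : Type) [NormedRing A] [NormedAlgebra ℝ A]
    (B : Type) [NormedAddCommGroup B] [NormedSpace ℝ B]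
    (l r : A →L[ℝ] B →L[ℝ] B) : Lvl :=
  Lvl.mk A B (ContinuousLinearMap.mul ℝ A) l r

/-! Restricting a derivation `D : A** → B***` to `A` and pairing it with `B` gives a derivation
`A → B*`, which is inner, implemented by some `f ∈ B*`. Subtracting the inner derivation of
`f ∈ B***` leaves a derivation `D₁` vanishing on `A × B`. Because `A·B** ⊆ B` and `B**·A ⊆ B`,
`A` acting on either side kills every element of `B***` that annihilates `B`, so the derivation
identity gives `D₁(ab) = 0`. Every `a` is the limit of the products `eᵢa`, so `D₁` vanishes on
`A`, and then on all of `A**` because a weak*-continuous functional on `A**` is evaluation at an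
element of `A*`. -/

section

local notation "ι" => inclusionInDoubleDual ℝ _

section Bimodule

variable {B : Type} [NormedAddCommGroup B] [NormedSpace ℝ B]
  {mul : A →L[ℝ] A →L[ℝ] A} {l r : A →L[ℝ] B →L[ℝ] B}

/- Each identity is the corresponding bimodule axiom read through the three adjoints that
make up `arens`; after unfolding, both sides agree argument by argument. -/
theorem IsBimod.arens (h : IsBimod mul l r) :
    IsBimod (X := Dual ℝ (Dual ℝ B)) (A' := Dual ℝ (Dual ℝ A))
      (arens mul) (arens l) (arens r.flip).flip := by
  obtain ⟨hl, hr, hlr⟩ := h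
  refine ⟨fun F G H => ?_, fun F G H => ?_, fun F G H => ?_⟩ <;> ext β
  · exact congrArg F <| ContinuousLinearMap.ext fun a => congrArg G <|
      ContinuousLinearMap.ext fun a' => congrArg H <|
      ContinuousLinearMap.ext fun b => congrArg β (hl a a' b)
  · exact congrArg H <| ContinuousLinearMap.ext fun b => congrArg F <|
      ContinuousLinearMap.ext fun a => congrArg G <|
      ContinuousLinearMap.ext fun a' => congrArg β (hr a a' b)
  · exact congrArg F <| ContinuousLinearMap.ext fun a => congrArg H <|
      ContinuousLinearMap.ext fun b => congrArg G <|
      ContinuousLinearMap.ext fun a' => congrArg β (hlr a a' b)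

theorem IsBimod.dual (h : IsBimod mul l r) : IsBimod mul (dualAct r) (dualAct l) := by
  obtain ⟨hl, hr, hlr⟩ := h
  refine ⟨fun a b f => ?_, fun a b f => ?_, fun a b f => ?_⟩ <;> ext x
  · exact congrArg f (hr a b x)
  · exact congrArg f (hl a b x)
  · exact congrArg f (hlr b a x)

theorem IsBimod.isDer_inner (h : IsBimod mul l r) (x : B) :
    IsDer mul l r (l.flip x - r.flip x) := by
  obtain ⟨hl, hr, hlr⟩ := h
  intro a b
  simp only [sub_apply, flip_apply, map_sub, hl, hr, hlr]
  abel

theorem IsDer.sub {D D' : A →L[ℝ] B} (hD : IsDer mul l r D) (hD' : IsDer mul l r D') :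
    IsDer mul l r (D - D') := by
  intro a b
  simp only [sub_apply, map_sub, hD a b, hD' a b]
  abel

end Bimodule

section Restriction

variable {B : Type} [NormedAddCommGroup B] [NormedSpace ℝ B]
  {mul : A →L[ℝ] A →L[ℝ] A} {l r : A →L[ℝ] B →L[ℝ] B}

def predualRestriction (D : Dual ℝ (Dual ℝ A) →L[ℝ] Dual ℝ (Dual ℝ (Dual ℝ B))) :
    A →L[ℝ] Dual ℝ B :=
  (dualMap' (X := B) (Y := Dual ℝ (Dual ℝ B)) (inclusionInDoubleDual ℝ B)).comp
    (D.comp (inclusionInDoubleDual ℝ A))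

lemma predualRestriction_sub (D D' : Dual ℝ (Dual ℝ A) →L[ℝ] Dual ℝ (Dual ℝ (Dual ℝ B))) :
    predualRestriction (D - D') = predualRestriction D - predualRestriction D' := rfl

lemma predualRestriction_inner (f : Dual ℝ B) :
    predualRestriction ((dualAct (W := Dual ℝ (Dual ℝ A)) (X := Dual ℝ (Dual ℝ B))
        (arens r.flip).flip).flip (ι f) -
      (dualAct (W := Dual ℝ (Dual ℝ A)) (X := Dual ℝ (Dual ℝ B)) (arens l)).flip (ι f)) =
      (dualAct r).flip f - (dualAct l).flip f := rfl

theorem IsDer.predualRestriction {D : Dual ℝ (Dual ℝ A) →L[ℝ] Dual ℝ (Dual ℝ (Dual ℝ B))}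
    (hD : IsDer (arens mul) (dualAct (W := Dual ℝ (Dual ℝ A)) (X := Dual ℝ (Dual ℝ B))
      (arens r.flip).flip)
      (dualAct (W := Dual ℝ (Dual ℝ A)) (X := Dual ℝ (Dual ℝ B)) (arens l)) D) :
    IsDer mul (dualAct r) (dualAct l) (predualRestriction D) := by
  intro a b
  ext x
  exact congrArg (fun Φ => Φ (ι x)) (hD (ι a) (ι b))

theorem dualAct_eq_zero_of_annihilates {W X : Type} [NormedAddCommGroup W] [NormedSpace ℝ W]
    [NormedAddCommGroup X] [NormedSpace ℝ X]
    (t : W →L[ℝ] Dual ℝ (Dual ℝ X) →L[ℝ] Dual ℝ (Dual ℝ X)) {w : W}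
    (ht : ∀ G, ∃ x, t w G = ι x) {Φ : Dual ℝ (Dual ℝ (Dual ℝ X))} (hΦ : ∀ x, Φ (ι x) = 0) :
    dualAct (X := Dual ℝ (Dual ℝ X)) t w Φ = 0 := by
  ext G
  obtain ⟨x, hx⟩ := ht G
  rw [dualAct_apply, hx, hΦ, zero_apply]

theorem IsDer.map_mul_eq_zero {D : Dual ℝ (Dual ℝ A) →L[ℝ] Dual ℝ (Dual ℝ (Dual ℝ B))}
    (hD : IsDer (arens mul) (dualAct (W := Dual ℝ (Dual ℝ A)) (X := Dual ℝ (Dual ℝ B))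
      (arens r.flip).flip)
      (dualAct (W := Dual ℝ (Dual ℝ A)) (X := Dual ℝ (Dual ℝ B)) (arens l)) D)
    (hl : ∀ (a : A) (G : Dual ℝ (Dual ℝ B)), ∃ b : B, arens l (ι a) G = ι b)
    (hr : ∀ (a : A) (G : Dual ℝ (Dual ℝ B)), ∃ b : B, (arens r.flip).flip (ι a) G = ι b)
    (h0 : ∀ (a : A) (b : B), D (ι a) (ι b) = 0) (a b : A) : D (ι (mul a b)) = 0 := by
  change D (arens mul (ι a) (ι b)) = 0
  rw [hD, dualAct_eq_zero_of_annihilates _ (hr a) (h0 b),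
    dualAct_eq_zero_of_annihilates _ (hl b) (h0 a), add_zero]

end Restriction

theorem eq_zero_of_tendsto_mul_left {R E I : Type} [Mul R] [TopologicalSpace R]
    [TopologicalSpace E] [T2Space E] [Zero E] {F : Filter I} [F.NeBot] {e : I → R}
    (he : ∀ a, Filter.Tendsto (fun i => e i * a) F (nhds a)) {f : R → E} (hf : Continuous f)
    (h : ∀ a b, f (a * b) = 0) (a : R) : f a = 0 :=
  tendsto_nhds_unique ((hf.tendsto a).comp (he a)) (by simp [Function.comp_def, h])

theorem eq_zero_of_weakStar_continuous {X Y : Type} [NormedAddCommGroup X] [NormedSpace ℝ X]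
    [NormedAddCommGroup Y] [NormedSpace ℝ Y] (D : Dual ℝ (Dual ℝ X) →L[ℝ] Dual ℝ Y)
    (hD : ∀ y, Continuous fun F : WeakDual ℝ (Dual ℝ X) => D F y) (h : ∀ x, D (ι x) = 0) :
    D = 0 := by
  ext F y
  obtain ⟨g, hg⟩ := LinearMap.dualEmbedding_surjective (topDualPairing ℝ (Dual ℝ X))
    ⟨((ContinuousLinearMap.apply ℝ ℝ y).comp D).toLinearMap, hD y⟩
  have hg_apply (F : Dual ℝ (Dual ℝ X)) : F g = D F y := DFunLike.congr_fun hg F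
  have hg_zero : g = 0 := by
    ext x
    simpa [h x] using hg_apply (ι x)
  simpa [hg_zero] using (hg_apply F).symm

end

theorem stmt14_general (A : Type) [NormedRing A] [NormedAlgebra ℝ A]
    (B : Type) [NormedAddCommGroup B] [NormedSpace ℝ B]
    (l r : A →L[ℝ] B →L[ℝ] B)
    (hbim : IsBimod (ContinuousLinearMap.mul ℝ A) l r)
    -- `A` has a bounded left approximate identity
    (hBLAI : ∃ (ι : Type) (F : Filter ι) (e : ι → A), F.NeBot ∧
      (∃ C : ℝ, ∀ i, ‖e i‖ ≤ C) ∧ ∀ a : A, Filter.Tendsto (fun i => e i * a) F (nhds a))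
    -- `A·B** ⊆ B`
    (hl2 : ∀ (a : A) (G : Dual ℝ (Dual ℝ B)), ∃ b : B,
      arens l (inclusionInDoubleDual ℝ A a) G = inclusionInDoubleDual ℝ B b)
    -- `B**·A ⊆ B`
    (hr2 : ∀ (a : A) (G : Dual ℝ (Dual ℝ B)), ∃ b : B,
      (arens r.flip).flip (inclusionInDoubleDual ℝ A a) G = inclusionInDoubleDual ℝ B b)
    -- every derivation `A** → B***` is weak*-to-weak* continuous
    (hwcont : ∀ D : Dual ℝ (Dual ℝ A) →L[ℝ] Dual ℝ (Dual ℝ (Dual ℝ B)),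
      IsDer (arens (ContinuousLinearMap.mul ℝ A))
        (dualAct (W := Dual ℝ (Dual ℝ A)) (X := Dual ℝ (Dual ℝ B)) ((arens r.flip).flip))
        (dualAct (W := Dual ℝ (Dual ℝ A)) (X := Dual ℝ (Dual ℝ B)) (arens l)) D →
      ∀ G : Dual ℝ (Dual ℝ B), Continuous fun F : WeakDual ℝ (Dual ℝ A) => D F G)
    -- `H¹(A, B*) = 0`
    (h1 : ∀ D : A →L[ℝ] Dual ℝ B,
      IsDer (ContinuousLinearMap.mul ℝ A) (dualAct r) (dualAct l) D →
      IsInner (dualAct r) (dualAct l) D) :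
    -- `H¹(A**, B***) = 0`
    ∀ D : Dual ℝ (Dual ℝ A) →L[ℝ] Dual ℝ (Dual ℝ (Dual ℝ B)),
      IsDer (arens (ContinuousLinearMap.mul ℝ A))
        (dualAct (W := Dual ℝ (Dual ℝ A)) (X := Dual ℝ (Dual ℝ B)) ((arens r.flip).flip))
        (dualAct (W := Dual ℝ (Dual ℝ A)) (X := Dual ℝ (Dual ℝ B)) (arens l)) D →
      IsInner
        (dualAct (W := Dual ℝ (Dual ℝ A)) (X := Dual ℝ (Dual ℝ B)) ((arens r.flip).flip))
        (dualAct (W := Dual ℝ (Dual ℝ A)) (X := Dual ℝ (Dual ℝ B)) (arens l)) D := by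
  intro D hD
  obtain ⟨f, hf⟩ := h1 _ hD.predualRestriction
  set x := inclusionInDoubleDual ℝ (Dual ℝ B) f
  set D₁ := D - ((dualAct (W := Dual ℝ (Dual ℝ A)) (X := Dual ℝ (Dual ℝ B))
    (arens r.flip).flip).flip x - (dualAct (W := Dual ℝ (Dual ℝ A)) (X := Dual ℝ (Dual ℝ B))
    (arens l)).flip x) with hD₁_def
  have hD₁ := hD.sub (hbim.arens.dual.isDer_inner x)
  have hD₁_restrict : predualRestriction D₁ = 0 := by
    rw [hD₁_def, predualRestriction_sub, predualRestriction_inner, sub_eq_zero]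
    exact ContinuousLinearMap.ext hf
  have hD₁_pairs : ∀ a b, D₁ (inclusionInDoubleDual ℝ A a) (inclusionInDoubleDual ℝ B b) = 0 :=
    fun a b => congrArg (fun d => d a b) hD₁_restrict
  obtain ⟨I, F, e, hF, -, he⟩ := hBLAI
  have hD₁_A : ∀ a, D₁ (inclusionInDoubleDual ℝ A a) = 0 :=
    eq_zero_of_tendsto_mul_left he (D₁.comp (inclusionInDoubleDual ℝ A)).continuous
      (hD₁.map_mul_eq_zero hl2 hr2 hD₁_pairs)
  have hD₁_zero :=
    eq_zero_of_weakStar_continuous (Y := Dual ℝ (Dual ℝ B)) D₁ (hwcont D₁ hD₁) hD₁_A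
  exact ⟨x, fun F => sub_eq_zero.mp (congrArg (fun T => T F) hD₁_zero)⟩

/-- **Theorem 2-20.** Let `A` be a Banach algebra with a bounded left approximate
identity and `B` a Banach `A`-bimodule with `A·B** ⊆ B` and `B**·A ⊆ B`, such that
every derivation `A** → B***` is weak*-to-weak* continuous. If every continuous
derivation `A → B*` is inner, then every continuous derivation `A** → B***` is inner. -/
theorem stmt14 (A : Type) [NormedRing A] [NormedAlgebra ℝ A] [CompleteSpace A]
    (B : Type) [NormedAddCommGroup B] [NormedSpace ℝ B] [CompleteSpace B]
    (l r : A →L[ℝ] B →L[ℝ] B)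
    (hbim : IsBimod (ContinuousLinearMap.mul ℝ A) l r)
    -- `A` has a bounded left approximate identity
    (hBLAI : ∃ (ι : Type) (F : Filter ι) (e : ι → A), F.NeBot ∧
      (∃ C : ℝ, ∀ i, ‖e i‖ ≤ C) ∧ ∀ a : A, Filter.Tendsto (fun i => e i * a) F (nhds a))
    -- `A·B** ⊆ B`
    (hl2 : ∀ (a : A) (G : Dual ℝ (Dual ℝ B)), ∃ b : B,
      arens l (inclusionInDoubleDual ℝ A a) G = inclusionInDoubleDual ℝ B b)
    -- `B**·A ⊆ B`
    (hr2 : ∀ (a : A) (G : Dual ℝ (Dual ℝ B)), ∃ b : B,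
      (arens r.flip).flip (inclusionInDoubleDual ℝ A a) G = inclusionInDoubleDual ℝ B b)
    -- every derivation `A** → B***` is weak*-to-weak* continuous
    (hwcont : ∀ D : Dual ℝ (Dual ℝ A) →L[ℝ] Dual ℝ (Dual ℝ (Dual ℝ B)),
      IsDer (arens (ContinuousLinearMap.mul ℝ A))
        (dualAct (W := Dual ℝ (Dual ℝ A)) (X := Dual ℝ (Dual ℝ B)) ((arens r.flip).flip))
        (dualAct (W := Dual ℝ (Dual ℝ A)) (X := Dual ℝ (Dual ℝ B)) (arens l)) D →
      ∀ G : Dual ℝ (Dual ℝ B), Continuous fun F : WeakDual ℝ (Dual ℝ A) => D F G)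
    -- `H¹(A, B*) = 0`
    (h1 : ∀ D : A →L[ℝ] Dual ℝ B,
      IsDer (ContinuousLinearMap.mul ℝ A) (dualAct r) (dualAct l) D →
      IsInner (dualAct r) (dualAct l) D) :
    -- `H¹(A**, B***) = 0`
    ∀ D : Dual ℝ (Dual ℝ A) →L[ℝ] Dual ℝ (Dual ℝ (Dual ℝ B)),
      IsDer (arens (ContinuousLinearMap.mul ℝ A))
        (dualAct (W := Dual ℝ (Dual ℝ A)) (X := Dual ℝ (Dual ℝ B)) ((arens r.flip).flip))
        (dualAct (W := Dual ℝ (Dual ℝ A)) (X := Dual ℝ (Dual ℝ B)) (arens l)) D →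
      IsInner
        (dualAct (W := Dual ℝ (Dual ℝ A)) (X := Dual ℝ (Dual ℝ B)) ((arens r.flip).flip))
        (dualAct (W := Dual ℝ (Dual ℝ A)) (X := Dual ℝ (Dual ℝ B)) (arens l)) D :=
  stmt14_general A B l r hbim hBLAI hl2 hr2 hwcont h1
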